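/- arXiv:1602.07938 — 3 statements merged into one kernel-verified Lean document; each statement's English description precedes it below -/
import Mathlib

section
/- Let 0 < κ < 1 and let w be a weight on ℝ^n in the anisotropic Muckenhoupt class A_1. Then there exists a constant C > 0 such that for every t > 0, every parallelepiped E, and every f ∈ L_{1,κ,a}(w), one has w({x ∈ E : M f(x) > t}) ≤ (C/t)·‖f‖_{L_{1,κ,a}(w)}·w(E)^κ. -/
open MeasureTheory ENNReal Set

noncomputable section

/-- The anisotropic parallelepiped `E(x,t) = {y : |y i - x i| ≤ t ^ (a i)}`. -/
def aniBox {n : ℕ} (a x : Fin n → ℝ) (t : ℝ) : Set (Fin n → ℝ) :=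
  {y | ∀ i, |y i - x i| ≤ t ^ a i}

/-- The weighted measure `w(E) = ∫_E w`. -/
def wMeas {n : ℕ} (w : (Fin n → ℝ) → ℝ) (E : Set (Fin n → ℝ)) : ℝ≥0∞ :=
  ∫⁻ y in E, ENNReal.ofReal (w y)

/-- The weighted anisotropic Morrey norm with `p = 1`:
`‖f‖_{L_{1,κ,a}(w)} = sup_E w(E)^{-κ} ∫_E |f| w` over all parallelepipeds `E`. -/
def morreyNorm1 {n : ℕ} (a : Fin n → ℝ) (w : (Fin n → ℝ) → ℝ) (κ : ℝ)
    (f : (Fin n → ℝ) → ℝ) : ℝ≥0∞ :=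
  ⨆ (x : Fin n → ℝ) (t : ℝ) (_ : 0 < t),
    (∫⁻ y in aniBox a x t, ENNReal.ofReal (|f y| * w y)) /
      wMeas w (aniBox a x t) ^ κ

/-- The anisotropic (centered) maximal operator
`M f (x) = sup_{t > 0} |E(x,t)|⁻¹ ∫_{E(x,t)} |f|`. -/
def maxOp {n : ℕ} (a : Fin n → ℝ) (f : (Fin n → ℝ) → ℝ) (x : Fin n → ℝ) : ℝ≥0∞ :=
  ⨆ (t : ℝ) (_ : 0 < t),
    (∫⁻ y in aniBox a x t, ENNReal.ofReal |f y|) / volume (aniBox a x t)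

/-!
By the `A₁` condition, for a.e. `y` in a box `E(x, s)` and bounded dilations `c`,
`w(E(x, c s)) / |E(x, s)| ≤ D w(y)`: the dilated box sits in a box centred at `y` of comparable
volume, on which the `w`-average is at most `M w (y) ≤ C w(y)`. Integrating over `E(x, s)` shows
that `w` is doubling, and that `τ ≤ |E|⁻¹ ∫_E |f|` forces `τ w(E) ≤ D ∫_E |f| w ≤ D ‖f‖ w(E)^κ`.

Each point of `{M f > τ} ∩ E(z, r)` is the centre of such a box. If one of these boxes has radius
at least `r`, it contains `E(z, r)` up to doubling, and `κ < 1` turns the bound on it into the bound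
on `E(z, r)`. Otherwise a Vitali subfamily of disjoint boxes, all inside `E(z, L r)` for a fixed
dilation `L`, covers the level set after a fixed enlargement; summing over it gives
`τ w(level set) ≲ ‖f‖ w(E(z, L r))^κ`, and doubling returns to `E(z, r)`.
-/

lemma ENNReal.rpow_one_sub_mul_rpow {x : ℝ≥0∞} (h0 : x ≠ 0) (ht : x ≠ ⊤) (κ : ℝ) :
    x ^ (1 - κ) * x ^ κ = x := by
  rw [← ENNReal.rpow_add _ _ h0 ht, sub_add_cancel, ENNReal.rpow_one]

lemma ENNReal.rpow_le_mul_rpow_of_le_mul {x y D : ℝ≥0∞} {p : ℝ} (hD : 1 ≤ D)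
    (hp0 : 0 ≤ p) (hp1 : p ≤ 1) (h : x ≤ D * y) : x ^ p ≤ D * y ^ p :=
  calc x ^ p ≤ (D * y) ^ p := ENNReal.rpow_le_rpow h hp0
    _ = D ^ p * y ^ p := ENNReal.mul_rpow_of_nonneg _ _ hp0
    _ ≤ D ^ (1 : ℝ) * y ^ p := by gcongr
    _ = D * y ^ p := by rw [ENNReal.rpow_one]

namespace AnisotropicMorrey

variable {n : ℕ} {a : Fin n → ℝ} {w : (Fin n → ℝ) → ℝ}

lemma aniBox_eq_pi (a x : Fin n → ℝ) (s : ℝ) :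
    aniBox a x s = Set.pi univ fun i => Icc (x i - s ^ a i) (x i + s ^ a i) := by
  ext y
  simp only [aniBox, mem_ofPred_eq, mem_pi, mem_univ, true_implies, mem_Icc, abs_sub_le_iff]
  exact forall_congr' fun i => by constructor <;> rintro ⟨h₁, h₂⟩ <;> constructor <;> linarith

lemma measurableSet_aniBox (a x : Fin n → ℝ) (s : ℝ) : MeasurableSet (aniBox a x s) := by
  rw [aniBox_eq_pi]
  exact MeasurableSet.univ_pi fun _ => measurableSet_Icc

lemma isCompact_aniBox (a x : Fin n → ℝ) (s : ℝ) : IsCompact (aniBox a x s) := by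
  rw [aniBox_eq_pi]
  exact isCompact_univ_pi fun _ => isCompact_Icc

lemma mem_aniBox_comm {x y : Fin n → ℝ} {s : ℝ} : x ∈ aniBox a y s ↔ y ∈ aniBox a x s := by
  simp only [aniBox, mem_ofPred_eq, abs_sub_comm]

lemma mem_aniBox_self (x : Fin n → ℝ) {s : ℝ} (hs : 0 ≤ s) : x ∈ aniBox a x s := fun i => by
  simpa using Real.rpow_nonneg hs (a i)

lemma self_mem_interior_aniBox (x : Fin n → ℝ) {s : ℝ} (hs : 0 < s) :
    x ∈ interior (aniBox a x s) := by
  rw [aniBox_eq_pi, interior_pi_set finite_univ]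
  intro i _
  have := Real.rpow_pos_of_pos hs (a i)
  simp only [interior_Icc, mem_Ioo]
  constructor <;> linarith

lemma aniBox_mono (ha : ∀ i, 0 ≤ a i) (x : Fin n → ℝ) {s s' : ℝ} (hs : 0 ≤ s) (hss' : s ≤ s') :
    aniBox a x s ⊆ aniBox a x s' := fun _ hy i =>
  (hy i).trans (Real.rpow_le_rpow hs hss' (ha i))

lemma aniBox_subset_aniBox_mul (ha : ∀ i, 0 ≤ a i) {L : ℝ} (hL : 0 ≤ L)
    (hL2 : ∀ i, 2 ≤ L ^ a i) {x y : Fin n → ℝ} {s u : ℝ} (hs : 0 ≤ s) (hsu : s ≤ u)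
    (hx : x ∈ aniBox a y u) : aniBox a x s ⊆ aniBox a y (L * u) := fun z hz i => by
  have hu : 0 ≤ u := hs.trans hsu
  have hsu' : s ^ a i ≤ u ^ a i := Real.rpow_le_rpow hs hsu (ha i)
  have hu' : 0 ≤ u ^ a i := Real.rpow_nonneg hu _
  calc |z i - y i| ≤ |z i - x i| + |x i - y i| := abs_sub_le _ _ _
    _ ≤ 2 * u ^ a i := by linarith [hz i, hx i]
    _ ≤ L ^ a i * u ^ a i := mul_le_mul_of_nonneg_right (hL2 i) hu'
    _ = (L * u) ^ a i := (Real.mul_rpow hL hu).symm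

lemma volume_aniBox (a x : Fin n → ℝ) (s : ℝ) :
    volume (aniBox a x s) = ∏ i, ENNReal.ofReal (2 * s ^ a i) := by
  rw [aniBox_eq_pi, volume_pi_pi]
  congr 1 with i
  rw [Real.volume_Icc]
  ring_nf

lemma volume_aniBox_pos (x : Fin n → ℝ) {s : ℝ} (hs : 0 < s) : 0 < volume (aniBox a x s) := by
  rw [volume_aniBox]
  exact CanonicallyOrderedAdd.prod_pos.2 fun i _ => ENNReal.ofReal_pos.2 (by positivity)

lemma volume_aniBox_ne_top (x : Fin n → ℝ) (s : ℝ) : volume (aniBox a x s) ≠ ⊤ :=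
  (isCompact_aniBox a x s).measure_lt_top.ne

lemma volume_aniBox_mul (x y : Fin n → ℝ) {c s : ℝ} (hc : 0 < c) (hs : 0 ≤ s) :
    volume (aniBox a x (c * s)) = ENNReal.ofReal (c ^ ∑ i, a i) * volume (aniBox a y s) := by
  rw [volume_aniBox, volume_aniBox, Real.rpow_sum_of_pos hc,
    ENNReal.ofReal_prod_of_nonneg fun i _ => by positivity, ← Finset.prod_mul_distrib]
  refine Finset.prod_congr rfl fun i _ => ?_
  rw [← ENNReal.ofReal_mul (by positivity), Real.mul_rpow hc.le hs]
  ring_nf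

lemma exists_one_le_forall_le_rpow (ha : ∀ i, 0 < a i) (K : ℝ) :
    ∃ L, 1 ≤ L ∧ ∀ i, K ≤ L ^ a i := by
  set K' := max 1 K
  refine ⟨K' ^ ∑ j, (a j)⁻¹, Real.one_le_rpow (le_max_left _ _)
    (Finset.sum_nonneg fun j _ => (inv_pos.2 (ha j)).le), fun i => ?_⟩
  have hexp : 1 ≤ (∑ j, (a j)⁻¹) * a i := by
    have := Finset.single_le_sum (fun j _ => (inv_pos.2 (ha j)).le) (Finset.mem_univ i)
    calc 1 = (a i)⁻¹ * a i := (inv_mul_cancel₀ (ha i).ne').symm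
      _ ≤ _ := mul_le_mul_of_nonneg_right this (ha i).le
  calc K ≤ K' := le_max_right _ _
    _ = K' ^ (1 : ℝ) := (Real.rpow_one _).symm
    _ ≤ K' ^ ((∑ j, (a j)⁻¹) * a i) := Real.rpow_le_rpow_of_exponent_le (le_max_left _ _) hexp
    _ = _ := Real.rpow_mul (zero_le_one.trans (le_max_left _ _)) _ _

lemma exists_countable_pairwiseDisjoint_aniBox_cover (ha : ∀ i, 0 ≤ a i) {L : ℝ} (hL : 1 ≤ L)
    (hL2 : ∀ i, 2 ≤ L ^ a i) (S : Set (Fin n → ℝ)) (ρ : (Fin n → ℝ) → ℝ)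
    (hρ : ∀ x ∈ S, 0 < ρ x) {R : ℝ} (hR : ∀ x ∈ S, ρ x ≤ R) :
    ∃ u ⊆ S, u.Countable ∧ u.PairwiseDisjoint (fun x => aniBox a x (ρ x)) ∧
      S ⊆ ⋃ x ∈ u, aniBox a x (2 * L ^ 2 * ρ x) := by
  obtain ⟨u, huS, hdisj, hcov⟩ := Vitali.exists_disjoint_subfamily_covering_enlargement
    (fun x => aniBox a x (ρ x)) S ρ 2 one_lt_two (fun x hx => (hρ x hx).le) R hR
    fun x hx => ⟨x, mem_aniBox_self x (hρ x hx).le⟩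
  refine ⟨u, huS, hdisj.countable_of_nonempty_interior fun x hx =>
    ⟨x, self_mem_interior_aniBox x (hρ x (huS hx))⟩, hdisj, fun x hx => ?_⟩
  obtain ⟨y, hyu, ⟨p, hpx, hpy⟩, hxy⟩ := hcov x hx
  have hx0 := (hρ x hx).le
  have hy0 := (hρ y (huS hyu)).le
  have hL0 : 0 ≤ L := zero_le_one.trans hL
  -- `E(x, ρ x) ⊆ E(p, L · 2ρ y) ⊆ E(y, L · L · 2ρ y)`: hence the enlargement factor `2 L²`
  have h₁ : aniBox a x (ρ x) ⊆ aniBox a p (L * (2 * ρ y)) :=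
    aniBox_subset_aniBox_mul ha hL0 hL2 hx0 hxy
      (aniBox_mono ha p hx0 hxy (mem_aniBox_comm.1 hpx))
  have h₂ : aniBox a p (L * (2 * ρ y)) ⊆ aniBox a y (L * (L * (2 * ρ y))) :=
    aniBox_subset_aniBox_mul ha hL0 hL2 (by positivity) le_rfl
      (aniBox_mono ha y hy0 (by nlinarith) hpy)
  refine mem_biUnion hyu ?_
  rw [show 2 * L ^ 2 * ρ y = L * (L * (2 * ρ y)) by ring]
  exact h₂ (h₁ (mem_aniBox_self x hx0))

lemma wMeas_mono {E F : Set (Fin n → ℝ)} (h : E ⊆ F) : wMeas w E ≤ wMeas w F :=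
  lintegral_mono_set h

lemma wMeas_aniBox_ne_top (hw : LocallyIntegrable w volume) (x : Fin n → ℝ) (s : ℝ) :
    wMeas w (aniBox a x s) ≠ ⊤ :=
  (hw.integrableOn_isCompact (isCompact_aniBox a x s)).lintegral_lt_top.ne

lemma wMeas_aniBox_pos (hw : LocallyIntegrable w volume) (hwpos : ∀ y, 0 < w y)
    (x : Fin n → ℝ) {s : ℝ} (hs : 0 < s) : 0 < wMeas w (aniBox a x s) := by
  have hmeas : AEMeasurable (fun y => ENNReal.ofReal (w y)) (volume.restrict (aniBox a x s)) :=
    (hw.integrableOn_isCompact (isCompact_aniBox a x s)).aemeasurable.ennreal_ofReal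
  refine pos_iff_ne_zero.2 fun h => (volume_aniBox_pos (a := a) x hs).ne' ?_
  rw [wMeas, setLIntegral_eq_zero_iff' (measurableSet_aniBox a x s) hmeas] at h
  exact measure_eq_zero_iff_ae_notMem.2 <| h.mono fun y hy hyE =>
    (ENNReal.ofReal_pos.2 (hwpos y)).ne' (hy hyE)

lemma setLIntegral_aniBox_le_maxOp_mul_volume (g : (Fin n → ℝ) → ℝ) (x : Fin n → ℝ) {s : ℝ}
    (hs : 0 < s) :
    ∫⁻ y in aniBox a x s, ENNReal.ofReal |g y| ≤ maxOp a g x * volume (aniBox a x s) :=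
  (ENNReal.div_le_iff (volume_aniBox_pos x hs).ne' (volume_aniBox_ne_top x s)).1 <|
    le_iSup₂ (f := fun s (_ : 0 < s) => (∫⁻ y in aniBox a x s, ENNReal.ofReal |g y|) /
      volume (aniBox a x s)) s hs

lemma exists_lt_average_of_lt_maxOp {f : (Fin n → ℝ) → ℝ} {x : Fin n → ℝ} {τ : ℝ≥0∞}
    (h : τ < maxOp a f x) : ∃ s, 0 < s ∧
      τ < (∫⁻ y in aniBox a x s, ENNReal.ofReal |f y|) / volume (aniBox a x s) := by
  simpa only [maxOp, lt_iSup_iff, exists_prop] using h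

lemma setLIntegral_aniBox_le_morreyNorm1_mul (hw : LocallyIntegrable w volume)
    (hwpos : ∀ y, 0 < w y) (κ : ℝ) (f : (Fin n → ℝ) → ℝ) (x : Fin n → ℝ) {s : ℝ} (hs : 0 < s) :
    ∫⁻ y in aniBox a x s, ENNReal.ofReal (|f y| * w y) ≤
      morreyNorm1 a w κ f * wMeas w (aniBox a x s) ^ κ := by
  have hpos := wMeas_aniBox_pos hw hwpos x hs (a := a)
  have htop := wMeas_aniBox_ne_top hw x s (a := a)
  refine (ENNReal.div_le_iff (ENNReal.rpow_pos hpos htop).ne' ?_).1 ?_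
  · exact ENNReal.rpow_ne_top_of_ne_zero hpos.ne' htop
  · exact le_iSup₂_of_le x s <| le_iSup_of_le hs le_rfl

def AniDoubling (a : Fin n → ℝ) (w : (Fin n → ℝ) → ℝ) (Λ : ℝ) (D : ℝ≥0∞) : Prop :=
  ∀ x s c, 0 < s → 0 ≤ c → c ≤ Λ → wMeas w (aniBox a x (c * s)) ≤ D * wMeas w (aniBox a x s)

/-- The `A₁` condition in averaged form, `|E|⁻¹ w(E) ≤ D · ess inf_E w`, tested against `|f|`. -/
def AniAverageBound (a : Fin n → ℝ) (w : (Fin n → ℝ) → ℝ) (D : ℝ≥0∞) : Prop :=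
  ∀ (f : (Fin n → ℝ) → ℝ) x s, 0 < s →
    (∫⁻ y in aniBox a x s, ENNReal.ofReal |f y|) / volume (aniBox a x s) *
        wMeas w (aniBox a x s) ≤
      D * ∫⁻ y in aniBox a x s, ENNReal.ofReal (|f y| * w y)

section A1

variable {L C₀ Λ : ℝ}

/-- For `y ∈ E(x, s)` the box `E(x, c s)` lies in `E(y, L Λ s)`, whose `w`-average is at most
`M w (y) ≤ C₀ w(y)`. -/
lemma ae_wMeas_aniBox_div_volume_le (ha : ∀ i, 0 ≤ a i) (hL : 1 ≤ L) (hL2 : ∀ i, 2 ≤ L ^ a i)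
    (hw0 : ∀ y, 0 ≤ w y) (hA : ∀ᵐ y, maxOp a w y ≤ ENNReal.ofReal (C₀ * w y))
    (hΛ : 1 ≤ Λ) (x : Fin n → ℝ) {s c : ℝ} (hs : 0 < s) (hc : 0 ≤ c) (hcΛ : c ≤ Λ) :
    ∀ᵐ y ∂volume.restrict (aniBox a x s), wMeas w (aniBox a x (c * s)) /
      volume (aniBox a x s) ≤ ENNReal.ofReal (C₀ * (L * Λ) ^ ∑ i, a i) * ENNReal.ofReal (w y) := by
  filter_upwards [ae_restrict_of_ae hA, ae_restrict_mem (measurableSet_aniBox a x s)]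
    with y hAy hy
  have hΛs : s ≤ Λ * s := le_mul_of_one_le_left hs.le hΛ
  have hsub : aniBox a x (c * s) ⊆ aniBox a y (L * (Λ * s)) :=
    aniBox_subset_aniBox_mul ha (by linarith) hL2 (by positivity) (by gcongr)
      (mem_aniBox_comm.1 (aniBox_mono ha x hs.le hΛs hy))
  rw [← mul_assoc] at hsub
  have hLΛ : 0 < L * Λ := by positivity
  refine ENNReal.div_le_of_le_mul ?_
  calc wMeas w (aniBox a x (c * s))
      ≤ ∫⁻ z in aniBox a y (L * Λ * s), ENNReal.ofReal |w z| := by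
        simp only [abs_of_nonneg (hw0 _)]
        exact wMeas_mono hsub
    _ ≤ maxOp a w y * volume (aniBox a y (L * Λ * s)) :=
        setLIntegral_aniBox_le_maxOp_mul_volume w y (by positivity)
    _ ≤ ENNReal.ofReal (C₀ * w y) * (ENNReal.ofReal ((L * Λ) ^ ∑ i, a i) *
          volume (aniBox a x s)) := by
        rw [volume_aniBox_mul y x hLΛ hs.le]
        gcongr
    _ = _ := by
        rw [← mul_assoc, ← ENNReal.ofReal_mul' (by positivity),
          ← ENNReal.ofReal_mul' (hw0 y)]
        ring_nf

lemma aniDoubling_of_ae_maxOp_le (ha : ∀ i, 0 ≤ a i) (hL : 1 ≤ L) (hL2 : ∀ i, 2 ≤ L ^ a i)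
    (hw0 : ∀ y, 0 ≤ w y) (hA : ∀ᵐ y, maxOp a w y ≤ ENNReal.ofReal (C₀ * w y)) (hΛ : 1 ≤ Λ) :
    AniDoubling a w Λ (ENNReal.ofReal (C₀ * (L * Λ) ^ ∑ i, a i)) := by
  intro x s c hs hc hcΛ
  calc wMeas w (aniBox a x (c * s))
      = ∫⁻ _ in aniBox a x s, wMeas w (aniBox a x (c * s)) / volume (aniBox a x s) := by
        rw [setLIntegral_const, ENNReal.div_mul_cancel (volume_aniBox_pos x hs).ne'
          (volume_aniBox_ne_top x s)]
    _ ≤ ∫⁻ y in aniBox a x s, ENNReal.ofReal (C₀ * (L * Λ) ^ ∑ i, a i) * ENNReal.ofReal (w y) :=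
        lintegral_mono_ae (ae_wMeas_aniBox_div_volume_le ha hL hL2 hw0 hA hΛ x hs hc hcΛ)
    _ = _ := lintegral_const_mul' _ _ ENNReal.ofReal_ne_top

lemma aniAverageBound_of_ae_maxOp_le (ha : ∀ i, 0 ≤ a i) (hL : 1 ≤ L)
    (hL2 : ∀ i, 2 ≤ L ^ a i) (hw0 : ∀ y, 0 ≤ w y)
    (hA : ∀ᵐ y, maxOp a w y ≤ ENNReal.ofReal (C₀ * w y)) (hΛ : 1 ≤ Λ) :
    AniAverageBound a w (ENNReal.ofReal (C₀ * (L * Λ) ^ ∑ i, a i)) := by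
  intro f x s hs
  set D := ENNReal.ofReal (C₀ * (L * Λ) ^ ∑ i, a i)
  calc (∫⁻ y in aniBox a x s, ENNReal.ofReal |f y|) / volume (aniBox a x s) *
        wMeas w (aniBox a x s)
      = (∫⁻ y in aniBox a x s, ENNReal.ofReal |f y|) *
          (wMeas w (aniBox a x (1 * s)) / volume (aniBox a x s)) := by
        simp only [one_mul, div_eq_mul_inv]
        ring
    _ ≤ ∫⁻ y in aniBox a x s, ENNReal.ofReal |f y| *
          (wMeas w (aniBox a x (1 * s)) / volume (aniBox a x s)) :=
        lintegral_mul_const_le _ _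
    _ ≤ ∫⁻ y in aniBox a x s, ENNReal.ofReal |f y| * (D * ENNReal.ofReal (w y)) :=
        lintegral_mono_ae <| (ae_wMeas_aniBox_div_volume_le ha hL hL2 hw0 hA hΛ x hs
          zero_le_one hΛ).mono fun y hy => by gcongr
    _ = D * ∫⁻ y in aniBox a x s, ENNReal.ofReal (|f y| * w y) := by
        rw [← lintegral_const_mul' _ _ ENNReal.ofReal_ne_top]
        congr 1 with y
        rw [ENNReal.ofReal_mul (abs_nonneg _)]
        ring

end A1

section LevelSets

variable {L κ Λ : ℝ} {D : ℝ≥0∞}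

/-- `τ w(E(x, s))^(1-κ) ≤ D ‖f‖`, and doubling compares `w(E(z, r))` with `w(E(x, s))`. -/
lemma mul_wMeas_aniBox_le_of_le_radius (ha : ∀ i, 0 ≤ a i) (hL : 0 ≤ L)
    (hL2 : ∀ i, 2 ≤ L ^ a i) (hw : LocallyIntegrable w volume) (hwpos : ∀ y, 0 < w y)
    (hκ0 : 0 ≤ κ) (hκ1 : κ ≤ 1) (hD : 1 ≤ D) (hLΛ : L ≤ Λ) (hdoub : AniDoubling a w Λ D)
    (havg : AniAverageBound a w D) (f : (Fin n → ℝ) → ℝ) {x z : Fin n → ℝ} {r s : ℝ} {τ : ℝ≥0∞}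
    (hr : 0 < r) (hx : x ∈ aniBox a z r) (hrs : r ≤ s)
    (hτ : τ ≤ (∫⁻ y in aniBox a x s, ENNReal.ofReal |f y|) / volume (aniBox a x s)) :
    τ * wMeas w (aniBox a z r) ≤ D ^ 2 * morreyNorm1 a w κ f * wMeas w (aniBox a z r) ^ κ := by
  set N := morreyNorm1 a w κ f
  set wB := wMeas w (aniBox a x s)
  set wE := wMeas w (aniBox a z r)
  have hs : 0 < s := hr.trans_le hrs
  have hwB := wMeas_aniBox_pos hw hwpos (a := a) x hs
  have hwBt : wB ^ κ ≠ ⊤ := ENNReal.rpow_ne_top_of_ne_zero hwB.ne' (wMeas_aniBox_ne_top hw x s)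
  have hB : τ * wB ^ (1 - κ) ≤ D * N := by
    refine (ENNReal.mul_le_mul_iff_left (ENNReal.rpow_pos hwB
      (wMeas_aniBox_ne_top hw x s)).ne' hwBt).1 ?_
    calc τ * wB ^ (1 - κ) * wB ^ κ = τ * wB := by
          rw [mul_assoc, ENNReal.rpow_one_sub_mul_rpow hwB.ne' (wMeas_aniBox_ne_top hw x s)]
      _ ≤ (∫⁻ y in aniBox a x s, ENNReal.ofReal |f y|) / volume (aniBox a x s) * wB := by gcongr
      _ ≤ D * ∫⁻ y in aniBox a x s, ENNReal.ofReal (|f y| * w y) := havg f x s hs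
      _ ≤ D * (N * wB ^ κ) := by
          gcongr
          exact setLIntegral_aniBox_le_morreyNorm1_mul hw hwpos κ f x hs
      _ = D * N * wB ^ κ := by ring
  have hEB : wE ≤ D * wB :=
    (wMeas_mono (aniBox_subset_aniBox_mul ha hL hL2 hr.le hrs
      (aniBox_mono ha x hr.le hrs (mem_aniBox_comm.1 hx)))).trans
      (hdoub x s L hs hL hLΛ)
  have hwE := wMeas_aniBox_pos hw hwpos (a := a) z hr
  calc τ * wE = τ * (wE ^ (1 - κ) * wE ^ κ) := by
        rw [ENNReal.rpow_one_sub_mul_rpow hwE.ne' (wMeas_aniBox_ne_top hw z r)]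
    _ ≤ τ * (D * wB ^ (1 - κ) * wE ^ κ) := by
        gcongr
        exact ENNReal.rpow_le_mul_rpow_of_le_mul hD (by linarith) (by linarith) hEB
    _ = D * (τ * wB ^ (1 - κ)) * wE ^ κ := by ring
    _ ≤ D * (D * N) * wE ^ κ := by gcongr
    _ = D ^ 2 * N * wE ^ κ := by ring

lemma mul_wMeas_le_of_forall_le_radius (ha : ∀ i, 0 ≤ a i) (hL : 1 ≤ L)
    (hL2 : ∀ i, 2 ≤ L ^ a i) (hw : LocallyIntegrable w volume) (hwpos : ∀ y, 0 < w y)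
    (hκ0 : 0 ≤ κ) (hκ1 : κ ≤ 1) (hD : 1 ≤ D) (hdoub : AniDoubling a w (2 * L ^ 2) D)
    (havg : AniAverageBound a w D) (f : (Fin n → ℝ) → ℝ) {z : Fin n → ℝ} {r : ℝ} {τ : ℝ≥0∞}
    {S : Set (Fin n → ℝ)} (hr : 0 < r) (hS : S ⊆ aniBox a z r)
    (hsel : ∀ x ∈ S, ∃ s, 0 < s ∧ s ≤ r ∧
      τ ≤ (∫⁻ y in aniBox a x s, ENNReal.ofReal |f y|) / volume (aniBox a x s)) :
    τ * wMeas w S ≤ D ^ 3 * morreyNorm1 a w κ f * wMeas w (aniBox a z r) ^ κ := by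
  choose! ρ hρ0 hρr hρτ using hsel
  obtain ⟨u, huS, hu, hdisj, hcov⟩ :=
    exists_countable_pairwiseDisjoint_aniBox_cover ha hL hL2 S ρ hρ0 hρr
  have := hu.to_subtype
  have hL0 : 0 ≤ L := zero_le_one.trans hL
  have hLr : 0 < L * r := by positivity
  set N := morreyNorm1 a w κ f
  calc τ * wMeas w S ≤ τ * ∑' x : u, wMeas w (aniBox a x (2 * L ^ 2 * ρ x)) := by
        gcongr
        refine (wMeas_mono hcov).trans ?_
        rw [biUnion_eq_iUnion]
        exact lintegral_iUnion_le _ _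
    _ ≤ τ * ∑' x : u, D * wMeas w (aniBox a x (ρ x)) := by
        gcongr with x
        exact hdoub x _ _ (hρ0 x (huS x.2)) (by positivity) le_rfl
    _ = D * ∑' x : u, τ * wMeas w (aniBox a x (ρ x)) := by
        rw [ENNReal.tsum_mul_left, ENNReal.tsum_mul_left]
        ring
    _ ≤ D * ∑' x : u, D * ∫⁻ y in aniBox a x (ρ x), ENNReal.ofReal (|f y| * w y) := by
        gcongr D * ?_
        refine ENNReal.tsum_le_tsum fun x => ?_
        exact (mul_le_mul_left (hρτ x (huS x.2)) _).trans (havg f x _ (hρ0 x (huS x.2)))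
    _ = D ^ 2 * ∫⁻ y in ⋃ x ∈ u, aniBox a x (ρ x), ENNReal.ofReal (|f y| * w y) := by
        rw [lintegral_biUnion hu (fun x _ => measurableSet_aniBox _ _ _) hdisj,
          ENNReal.tsum_mul_left]
        ring
    _ ≤ D ^ 2 * ∫⁻ y in aniBox a z (L * r), ENNReal.ofReal (|f y| * w y) := by
        gcongr
        exact iUnion₂_subset fun x hx => aniBox_subset_aniBox_mul ha hL0 hL2
          (hρ0 x (huS hx)).le (hρr x (huS hx)) (hS (huS hx))
    _ ≤ D ^ 2 * (N * wMeas w (aniBox a z (L * r)) ^ κ) := by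
        gcongr
        exact setLIntegral_aniBox_le_morreyNorm1_mul hw hwpos κ f z hLr
    _ ≤ D ^ 2 * (N * (D * wMeas w (aniBox a z r) ^ κ)) := by
        gcongr
        exact ENNReal.rpow_le_mul_rpow_of_le_mul hD hκ0 hκ1
          (hdoub z r L hr hL0 (by nlinarith))
    _ = D ^ 3 * N * wMeas w (aniBox a z r) ^ κ := by ring

/-- Either some point of `E(z, r)` sees a large average of `|f|` on a box of radius `≥ r`, or every
point does so on a box of radius `< r`, and then the Vitali covering applies. -/
lemma mul_wMeas_setOf_lt_maxOp_le (ha : ∀ i, 0 ≤ a i) (hL : 1 ≤ L)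
    (hL2 : ∀ i, 2 ≤ L ^ a i) (hw : LocallyIntegrable w volume) (hwpos : ∀ y, 0 < w y)
    (hκ0 : 0 ≤ κ) (hκ1 : κ ≤ 1) (hD : 1 ≤ D) (hdoub : AniDoubling a w (2 * L ^ 2) D)
    (havg : AniAverageBound a w D) (f : (Fin n → ℝ) → ℝ) (z : Fin n → ℝ) {r : ℝ} (hr : 0 < r)
    (τ : ℝ≥0∞) :
    τ * wMeas w {x ∈ aniBox a z r | τ < maxOp a f x} ≤
      D ^ 3 * morreyNorm1 a w κ f * wMeas w (aniBox a z r) ^ κ := by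
  by_cases hbig : ∃ x ∈ aniBox a z r, ∃ s, r ≤ s ∧
      τ ≤ (∫⁻ y in aniBox a x s, ENNReal.ofReal |f y|) / volume (aniBox a x s)
  · obtain ⟨x, hx, s, hrs, hτ⟩ := hbig
    calc τ * wMeas w {x ∈ aniBox a z r | τ < maxOp a f x}
        ≤ τ * wMeas w (aniBox a z r) := by gcongr; exact wMeas_mono (sep_subset _ _)
      _ ≤ D ^ 2 * morreyNorm1 a w κ f * wMeas w (aniBox a z r) ^ κ :=
        mul_wMeas_aniBox_le_of_le_radius ha (zero_le_one.trans hL) hL2 hw hwpos hκ0 hκ1 hD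
          (by nlinarith) hdoub havg f hr hx hrs hτ
      _ ≤ D ^ 3 * morreyNorm1 a w κ f * wMeas w (aniBox a z r) ^ κ := by
        gcongr ?_ * _ * _
        exact pow_le_pow_right₀ hD (by norm_num)
  · push Not at hbig
    refine mul_wMeas_le_of_forall_le_radius ha hL hL2 hw hwpos hκ0 hκ1 hD hdoub havg f hr
      (sep_subset _ _) fun x hx => ?_
    obtain ⟨s, hs, hτs⟩ := exists_lt_average_of_lt_maxOp hx.2
    exact ⟨s, hs, (lt_of_not_ge fun hrs => (hbig x hx.1 s hrs).not_ge hτs.le).le, hτs.le⟩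

end LevelSets

end AnisotropicMorrey

open AnisotropicMorrey

/-- If `0 < κ < 1` and `w ∈ A_1` (i.e. `M w ≤ C w` a.e. for some `C > 1`), then
there is `C > 0` such that for all `t > 0`, every parallelepiped `E` and every
`f ∈ L_{1,κ,a}(w)`:
`w({x ∈ E : M f (x) > t}) ≤ (C/t) ‖f‖_{L_{1,κ,a}(w)} w(E)^κ`. -/
theorem maxOp_weak_type_on_weighted_anisotropic_Morrey
    {n : ℕ} (a : Fin n → ℝ) (ha : ∀ i, 0 < a i) (κ : ℝ)
    (hκ0 : 0 < κ) (hκ1 : κ < 1) (w : (Fin n → ℝ) → ℝ)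
    (hw : LocallyIntegrable w volume) (hwpos : ∀ x, 0 < w x)
    (hA1 : ∃ C : ℝ, 1 < C ∧ ∀ᵐ x ∂volume, maxOp a w x ≤ ENNReal.ofReal (C * w x)) :
    ∃ C : ℝ, 0 < C ∧ ∀ t : ℝ, 0 < t → ∀ z : Fin n → ℝ, ∀ r : ℝ, 0 < r →
      ∀ f : (Fin n → ℝ) → ℝ, Measurable f → morreyNorm1 a w κ f < ⊤ →
      wMeas w {x ∈ aniBox a z r | ENNReal.ofReal t < maxOp a f x} ≤
        ENNReal.ofReal (C / t) * morreyNorm1 a w κ f *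
          wMeas w (aniBox a z r) ^ κ := by
  obtain ⟨C₀, hC₀, hA⟩ := hA1
  obtain ⟨L, hL, hL2⟩ := exists_one_le_forall_le_rpow ha 2
  have ha0 : ∀ i, 0 ≤ a i := fun i => (ha i).le
  have hw0 : ∀ y, 0 ≤ w y := fun y => (hwpos y).le
  have hΛ : 1 ≤ 2 * L ^ 2 := by nlinarith
  set D := ENNReal.ofReal (C₀ * (L * (2 * L ^ 2)) ^ ∑ i, a i)
  have hD : 1 ≤ D := ENNReal.one_le_ofReal.2 <| one_le_mul_of_one_le_of_one_le hC₀.le <|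
    Real.one_le_rpow (by nlinarith) (Finset.sum_nonneg fun i _ => ha0 i)
  have hDt : D ^ 3 ≠ ⊤ := ENNReal.pow_ne_top ENNReal.ofReal_ne_top
  refine ⟨(D ^ 3).toReal, ENNReal.toReal_pos (pow_ne_zero 3 (zero_lt_one.trans_le hD).ne') hDt,
    fun t ht z r hr f _ _ => ?_⟩
  have hweak := mul_wMeas_setOf_lt_maxOp_le ha0 hL hL2 hw hwpos hκ0.le hκ1.le hD
    (aniDoubling_of_ae_maxOp_le ha0 hL hL2 hw0 hA hΛ)
    (aniAverageBound_of_ae_maxOp_le ha0 hL hL2 hw0 hA hΛ) f z hr (ENNReal.ofReal t)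
  have ht0 : ENNReal.ofReal t ≠ 0 := (ENNReal.ofReal_pos.2 ht).ne'
  rw [ENNReal.ofReal_div_of_pos ht, ENNReal.ofReal_toReal hDt, ← ENNReal.mul_div_right_comm,
    ← ENNReal.mul_div_right_comm, ENNReal.le_div_iff_mul_le (.inl ht0) (.inl ENNReal.ofReal_ne_top),
    mul_comm]
  exact hweak
end
end

section
/- Let 1 < p < ∞ and α ∈ ℝ. The anisotropic power weight w(x) = |x|_a^α, where |x|_a = max_{1≤i≤n} |x_i|^{1/a_i}, belongs to the anisotropic Muckenhoupt class A_p if and only if −|a| < α < |a|(p−1), where |a| = a_1 + ⋯ + a_n. -/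
open MeasureTheory ENNReal Set

noncomputable section

/-- The anisotropic quasi-norm `|x|_a = max_{1 ≤ i ≤ n} |x_i|^{1/a_i}`. -/
def aNorm {n : ℕ} (a x : Fin n → ℝ) : ℝ :=
  ⨆ i, |x i| ^ (1 / a i)

/-!
Write `ρ = aNorm a` and `s = ∑ i, a i`. The box `E(x,t)` is the `ρ`-ball `{y | ρ (y - x) ≤ t}`,
of volume `2ⁿ tˢ`, and `ρ` is a quasi-norm: `ρ (x + y) ≤ L max (ρ x) (ρ y)`.

Cutting the centred box `E(0,t)` into the dyadic shells `t / 2^(k+1) < ρ ≤ t / 2^k`, on each of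
which `ρ^β` is within a factor `2^|β|` of `(t / 2^k)^β` and whose volume is a constant times
`(t / 2^k)^s`, shows that `∫_{E(0,t)} ρ^β` is comparable to the geometric series
`t^(s+β) ∑ₖ 2^(-k(s+β))`: it is infinite for `β ≤ -s` and `O(t^(s+β))` for `β > -s`.

The weight dual to `ρ^α` is `ρ^(-α/(p-1))`, so the `A_p` condition on `E(0,1)` forces both
exponents to exceed `-s`, i.e. `-s < α < s(p-1)`. Conversely, for such exponents the average of
`ρ^β` over `E(x,t)` is `O(max (ρ x) t ^ β)`: if `ρ x ≫ t` then `ρ ≈ ρ x` on `E(x,t)`, and otherwise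
`E(x,t)` lies in a centred box of comparable volume. The powers of `max (ρ x) t` cancel in the
`A_p` product.
-/

lemma rpow_le_rpow_abs_mul_rpow {L u v γ : ℝ} (hL : 1 ≤ L) (hu : 0 < u) (hv : 0 < v)
    (huv : u ≤ L * v) (hvu : v ≤ L * u) : v ^ γ ≤ L ^ |γ| * u ^ γ := by
  have hL0 : 0 < L := one_pos.trans_le hL
  rcases le_or_gt 0 γ with hγ | hγ
  · calc v ^ γ ≤ (L * u) ^ γ := by gcongr
      _ = L ^ |γ| * u ^ γ := by rw [abs_of_nonneg hγ, Real.mul_rpow hL0.le hu.le]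
  · calc v ^ γ ≤ (u / L) ^ γ :=
          Real.rpow_le_rpow_of_nonpos (by positivity) ((div_le_iff₀' hL0).2 huv) hγ.le
      _ = L ^ |γ| * u ^ γ := by
          rw [abs_of_neg hγ, Real.div_rpow hu.le hL0.le, Real.rpow_neg hL0.le, div_eq_inv_mul]

lemma iUnion_Ioc_div_two_pow {t : ℝ} (ht : 0 < t) :
    ⋃ k : ℕ, Ioc (t / 2 ^ k / 2) (t / 2 ^ k) = Ioc 0 t := by
  ext u
  simp only [mem_iUnion, mem_Ioc]
  constructor
  · rintro ⟨k, hlo, hhi⟩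
    exact ⟨lt_of_le_of_lt (by positivity) hlo,
      hhi.trans (div_le_self ht.le (one_le_pow₀ one_le_two))⟩
  · rintro ⟨hu, hut⟩
    obtain ⟨k, hk, hk'⟩ := exists_nat_pow_near ((one_le_div hu).2 hut) one_lt_two
    refine ⟨k, ?_, (le_div_iff₀ (by positivity)).2 ?_⟩
    · rw [div_div, div_lt_iff₀ (by positivity), ← pow_succ]
      exact (div_lt_iff₀ hu).1 hk' |>.trans_eq (mul_comm _ _)
    · rw [mul_comm]
      exact (le_div_iff₀ hu).1 hk

lemma tsum_ofReal_div_two_pow_rpow {t : ℝ} (ht : 0 < t) (γ : ℝ) :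
    ∑' k : ℕ, ENNReal.ofReal ((t / 2 ^ k) ^ γ)
      = ENNReal.ofReal (t ^ γ) * (1 - ENNReal.ofReal (2 ^ (-γ)))⁻¹ := by
  have hterm (k : ℕ) : (t / 2 ^ k) ^ γ = t ^ γ * (2 ^ (-γ)) ^ k := by
    rw [Real.div_rpow ht.le (by positivity), ← Real.rpow_natCast, ← Real.rpow_natCast,
      ← Real.rpow_mul zero_le_two, ← Real.rpow_mul zero_le_two, neg_mul,
      Real.rpow_neg zero_le_two, div_eq_mul_inv, mul_comm γ]
  simp_rw [hterm, ENNReal.ofReal_mul (Real.rpow_nonneg ht.le γ),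
    ENNReal.ofReal_pow (Real.rpow_nonneg zero_le_two _), ENNReal.tsum_mul_left,
    ENNReal.tsum_geometric]

lemma lt_top_of_mul_rpow_lt_top {A B : ℝ≥0∞} {q : ℝ} (hq : 0 < q) (hA : A ≠ 0) (hB : B ≠ 0)
    (h : A * B ^ q < ⊤) : A < ⊤ ∧ B < ⊤ := by
  rcases ENNReal.mul_lt_top_iff.1 h with ⟨hA', hB'⟩ | h0 | h0
  · exact ⟨hA', (ENNReal.rpow_lt_top_iff_of_pos hq).1 hB'⟩
  · exact absurd h0 hA
  · simp [ENNReal.rpow_eq_zero_iff, hB, hq, hq.not_gt] at h0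

lemma inv_measure_mul_setLIntegral_le {α : Type*} [MeasurableSpace α] {μ : Measure α}
    {s : Set α} (hs : MeasurableSet s) {f : α → ℝ} {m : ℝ} (hf : ∀ y ∈ s, f y ≤ m) :
    (μ s)⁻¹ * ∫⁻ y in s, ENNReal.ofReal (f y) ∂μ ≤ ENNReal.ofReal m := by
  calc (μ s)⁻¹ * ∫⁻ y in s, ENNReal.ofReal (f y) ∂μ
      ≤ (μ s)⁻¹ * ∫⁻ _ in s, ENNReal.ofReal m ∂μ :=
        mul_le_mul_right (setLIntegral_mono' hs fun y hy => ENNReal.ofReal_le_ofReal (hf y hy)) _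
    _ = ENNReal.ofReal m * ((μ s)⁻¹ * μ s) := by rw [setLIntegral_const]; ring
    _ ≤ ENNReal.ofReal m := mul_le_of_le_one_right' (ENNReal.inv_mul_le_one _)

section

variable {n : ℕ} {a : Fin n → ℝ}

lemma aNorm_nonneg (y : Fin n → ℝ) : 0 ≤ aNorm a y :=
  Real.iSup_nonneg fun _ => Real.rpow_nonneg (abs_nonneg _) _

lemma aNorm_le_iff (ha : ∀ i, 0 < a i) {y : Fin n → ℝ} {r : ℝ} (hr : 0 ≤ r) :
    aNorm a y ≤ r ↔ ∀ i, |y i| ≤ r ^ a i := by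
  have hinv (i : Fin n) : a i * (1 / a i) = 1 := mul_one_div_cancel (ha i).ne'
  refine ⟨fun h i => ?_, fun h => Real.iSup_le (fun i => ?_) hr⟩
  · calc |y i| = (|y i| ^ (1 / a i)) ^ a i := by
          rw [← Real.rpow_mul (abs_nonneg _), mul_comm, hinv, Real.rpow_one]
      _ ≤ r ^ a i := by
          gcongr
          · exact (ha i).le
          exact le_ciSup (Finite.bddAbove_range fun j => |y j| ^ (1 / a j)) i |>.trans h
  · calc |y i| ^ (1 / a i) ≤ (r ^ a i) ^ (1 / a i) := by
          gcongr
          · exact (one_div_pos.2 (ha i)).le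
          exact h i
      _ = r := by rw [← Real.rpow_mul hr, hinv, Real.rpow_one]

lemma aNorm_le_zero_iff (ha : ∀ i, 0 < a i) {y : Fin n → ℝ} : aNorm a y ≤ 0 ↔ y = 0 := by
  simp [aNorm_le_iff ha le_rfl, Real.zero_rpow (ha _).ne', funext_iff]

lemma aNorm_sub_comm (x y : Fin n → ℝ) : aNorm a (x - y) = aNorm a (y - x) := by
  simp only [aNorm, Pi.sub_apply, abs_sub_comm]

lemma measurable_aNorm : Measurable (aNorm a) := by
  unfold aNorm
  fun_prop

lemma exists_aNorm_add_le (ha : ∀ i, 0 < a i) :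
    ∃ L, 1 ≤ L ∧ ∀ x y : Fin n → ℝ, aNorm a (x + y) ≤ L * max (aNorm a x) (aNorm a y) := by
  set L := 1 + ∑ i, (2 : ℝ) ^ (1 / a i)
  have hsum : 0 ≤ ∑ i, (2 : ℝ) ^ (1 / a i) := by positivity
  have two_le (i : Fin n) : 2 ≤ L ^ a i :=
    calc (2 : ℝ) = ((2 : ℝ) ^ (1 / a i)) ^ a i := by
          rw [← Real.rpow_mul zero_le_two, one_div_mul_cancel (ha i).ne', Real.rpow_one]
      _ ≤ L ^ a i := by
          gcongr
          · exact (ha i).le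
          exact (Finset.single_le_sum (f := fun j => (2 : ℝ) ^ (1 / a j))
            (fun j _ => by positivity) (Finset.mem_univ i)).trans (le_add_of_nonneg_left zero_le_one)
  refine ⟨L, le_add_of_nonneg_right hsum, fun x y => ?_⟩
  set M := max (aNorm a x) (aNorm a y)
  have hM : 0 ≤ M := (aNorm_nonneg x).trans (le_max_left _ _)
  have hL : 0 ≤ L := by positivity
  rw [aNorm_le_iff ha (mul_nonneg hL hM)]
  intro i
  have hx := (aNorm_le_iff ha hM).1 (le_max_left _ _) i
  have hy := (aNorm_le_iff ha hM).1 (le_max_right _ _) i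
  calc |(x + y) i| ≤ |x i| + |y i| := abs_add_le _ _
    _ ≤ 2 * M ^ a i := by linarith
    _ ≤ L ^ a i * M ^ a i := by gcongr; exact two_le i
    _ = (L * M) ^ a i := (Real.mul_rpow hL hM).symm

lemma mem_aniBox_iff (ha : ∀ i, 0 < a i) {x y : Fin n → ℝ} {t : ℝ} (ht : 0 ≤ t) :
    y ∈ aniBox a x t ↔ aNorm a (y - x) ≤ t := by
  simp [aniBox, aNorm_le_iff ha ht]

lemma aniBox_zero (ha : ∀ i, 0 < a i) {t : ℝ} (ht : 0 ≤ t) :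
    aniBox a 0 t = {y | aNorm a y ≤ t} := by
  ext y
  simp [mem_aniBox_iff ha ht]

lemma aniBox_eq_pi (x : Fin n → ℝ) (t : ℝ) :
    aniBox a x t = Set.pi univ fun i => Icc (x i - t ^ a i) (x i + t ^ a i) := by
  ext y
  simp only [aniBox, mem_ofPred_eq, mem_pi, mem_univ, true_implies, mem_Icc, abs_sub_le_iff]
  refine forall_congr' fun i => ?_
  constructor <;> rintro ⟨h1, h2⟩ <;> constructor <;> linarith

lemma measurableSet_aniBox (x : Fin n → ℝ) (t : ℝ) : MeasurableSet (aniBox a x t) := by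
  rw [aniBox_eq_pi]
  exact MeasurableSet.univ_pi fun _ => measurableSet_Icc

lemma volume_aniBox (x : Fin n → ℝ) {t : ℝ} (ht : 0 < t) :
    volume (aniBox a x t) = ENNReal.ofReal (2 ^ n * t ^ ∑ i, a i) := by
  have h2n : (2 : ℝ) ^ n = ∏ _ : Fin n, 2 := by simp
  rw [aniBox_eq_pi, volume_pi_pi, Real.rpow_sum_of_pos ht, h2n, ← Finset.prod_mul_distrib,
    ENNReal.ofReal_prod_of_nonneg fun i _ => by positivity]
  congr 1 with i
  rw [Real.volume_Icc]
  ring_nf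

lemma aniBox_subset_aniBox_zero (ha : ∀ i, 0 < a i) {L : ℝ} (hL0 : 0 ≤ L)
    (hL : ∀ x y : Fin n → ℝ, aNorm a (x + y) ≤ L * max (aNorm a x) (aNorm a y))
    (x : Fin n → ℝ) {t : ℝ} (ht : 0 ≤ t) :
    aniBox a x t ⊆ aniBox a 0 (L * max (aNorm a x) t) := by
  intro y hy
  rw [aniBox_zero ha (mul_nonneg hL0 (ht.trans (le_max_right _ _)))]
  calc aNorm a y = aNorm a (x + (y - x)) := by rw [add_sub_cancel]
    _ ≤ L * max (aNorm a x) (aNorm a (y - x)) := hL _ _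
    _ ≤ L * max (aNorm a x) t := by
        gcongr
        exact (mem_aniBox_iff ha ht).1 hy

lemma aNorm_comparable_of_mem_aniBox (ha : ∀ i, 0 < a i) {L : ℝ} (hL1 : 1 ≤ L)
    (hL : ∀ x y : Fin n → ℝ, aNorm a (x + y) ≤ L * max (aNorm a x) (aNorm a y))
    {x y : Fin n → ℝ} {t : ℝ} (ht : 0 ≤ t) (hx : L * t < aNorm a x) (hy : y ∈ aniBox a x t) :
    aNorm a x ≤ L * aNorm a y ∧ aNorm a y ≤ L * aNorm a x := by
  have hyx : aNorm a (x - y) ≤ t := aNorm_sub_comm x y ▸ (mem_aniBox_iff ha ht).1 hy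
  have hxy : aNorm a x ≤ L * max (aNorm a y) t :=
    calc aNorm a x = aNorm a (y + (x - y)) := by rw [add_sub_cancel]
      _ ≤ L * max (aNorm a y) (aNorm a (x - y)) := hL _ _
      _ ≤ L * max (aNorm a y) t := by gcongr
  have htx : t ≤ aNorm a x := by nlinarith
  refine ⟨?_, ?_⟩
  · rcases le_total (aNorm a y) t with h | h
    · rw [max_eq_right h] at hxy; linarith
    · rwa [max_eq_left h] at hxy
  · have := aniBox_subset_aniBox_zero ha (zero_le_one.trans hL1) hL x ht hy
    rwa [aniBox_zero ha (by positivity), mem_ofPred_eq, max_eq_left htx] at this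

def aniShell (a : Fin n → ℝ) (r : ℝ) : Set (Fin n → ℝ) := aNorm a ⁻¹' Ioc (r / 2) r

lemma measurableSet_aniShell (r : ℝ) : MeasurableSet (aniShell a r) :=
  measurable_aNorm measurableSet_Ioc

lemma volume_aniShell (ha : ∀ i, 0 < a i) {r : ℝ} (hr : 0 < r) :
    volume (aniShell a r)
      = ENNReal.ofReal (2 ^ n * (1 - 2 ^ (-∑ i, a i)) * r ^ ∑ i, a i) := by
  have hr2 : 0 < r / 2 := half_pos hr
  have hshell : aniShell a r = aniBox a 0 r \ aniBox a 0 (r / 2) := by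
    ext y
    simp [aniShell, aniBox_zero ha hr.le, aniBox_zero ha hr2.le, and_comm]
  have hsub : aniBox a 0 (r / 2) ⊆ aniBox a 0 r := by
    rw [aniBox_zero ha hr.le, aniBox_zero ha hr2.le]
    exact fun y hy => le_trans hy (half_le_self hr.le)
  rw [hshell, measure_sdiff hsub (measurableSet_aniBox _ _).nullMeasurableSet
    (by rw [volume_aniBox _ hr2]; exact ENNReal.ofReal_ne_top),
    volume_aniBox _ hr, volume_aniBox _ hr2, ← ENNReal.ofReal_sub _ (by positivity),
    Real.div_rpow hr.le zero_le_two, Real.rpow_neg zero_le_two]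
  ring_nf

lemma volume_aniShell_coeff_pos (hn : 0 < n) (ha : ∀ i, 0 < a i) :
    0 < 2 ^ n * (1 - (2 : ℝ) ^ (-∑ i, a i)) := by
  have hs : 0 < ∑ i, a i := Finset.sum_pos (fun i _ => ha i) ⟨⟨0, hn⟩, Finset.mem_univ _⟩
  have : (2 : ℝ) ^ (-∑ i, a i) < 1 :=
    Real.rpow_lt_one_of_one_lt_of_neg one_lt_two (neg_neg_of_pos hs)
  have : (0 : ℝ) < 2 ^ n := by positivity
  nlinarith

lemma pairwise_disjoint_aniShell_div_two_pow {t : ℝ} (ht : 0 ≤ t) :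
    Pairwise (Function.onFun Disjoint fun k : ℕ => aniShell a (t / 2 ^ k)) := by
  have hanti : Antitone fun k : ℕ => t / 2 ^ k := fun k l hkl =>
    div_le_div_of_nonneg_left ht (by positivity) (pow_le_pow_right₀ one_le_two hkl)
  refine (hanti.pairwise_disjoint_on_Ioc_succ).mono fun k l h => ?_
  simp only [Function.onFun, aniShell, Order.succ_eq_add_one, pow_succ, ← div_div] at h ⊢
  exact h.preimage _

lemma lintegral_aniBox_zero_eq_tsum (hn : 0 < n) (ha : ∀ i, 0 < a i) {t : ℝ} (ht : 0 < t)
    (f : (Fin n → ℝ) → ℝ≥0∞) :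
    ∫⁻ y in aniBox a 0 t, f y = ∑' k : ℕ, ∫⁻ y in aniShell a (t / 2 ^ k), f y := by
  have : Nonempty (Fin n) := ⟨⟨0, hn⟩⟩
  have hball : aniBox a 0 t = insert 0 (⋃ k : ℕ, aniShell a (t / 2 ^ k)) := by
    ext y
    simp only [aniShell, ← preimage_iUnion, iUnion_Ioc_div_two_pow ht, aniBox_zero ha ht.le,
      mem_ofPred_eq, mem_insert_iff, mem_preimage, mem_Ioc, ← aNorm_le_zero_iff ha]
    have := aNorm_nonneg (a := a) y
    constructor
    · intro h; by_cases h0 : aNorm a y ≤ 0 <;> simp_all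
    · rintro (h | ⟨-, h⟩) <;> linarith
  rw [hball, setLIntegral_congr (insert_ae_eq_self 0 _),
    lintegral_iUnion (fun _ => measurableSet_aniShell _)
      (pairwise_disjoint_aniShell_div_two_pow ht.le)]

lemma aNorm_rpow_comparable_of_mem_aniShell {r : ℝ} (hr : 0 < r) {y : Fin n → ℝ}
    (hy : y ∈ aniShell a r) (β : ℝ) :
    aNorm a y ^ β ≤ 2 ^ |β| * r ^ β ∧ r ^ β ≤ 2 ^ |β| * aNorm a y ^ β := by
  obtain ⟨hlo, hhi⟩ := hy
  have hy0 : 0 < aNorm a y := (half_pos hr).trans hlo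
  have hr2 : r ≤ 2 * aNorm a y := by linarith
  have hy2 : aNorm a y ≤ 2 * r := by linarith
  exact ⟨rpow_le_rpow_abs_mul_rpow one_le_two hr hy0 hr2 hy2,
    rpow_le_rpow_abs_mul_rpow one_le_two hy0 hr hy2 hr2⟩

lemma lintegral_aNorm_rpow_aniShell_le {r : ℝ} (hr : 0 < r) (β : ℝ) :
    ∫⁻ y in aniShell a r, ENNReal.ofReal (aNorm a y ^ β)
      ≤ ENNReal.ofReal (2 ^ |β|) * (ENNReal.ofReal (r ^ β) * volume (aniShell a r)) := by
  rw [← mul_assoc, ← ENNReal.ofReal_mul (by positivity), ← setLIntegral_const]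
  exact setLIntegral_mono' (measurableSet_aniShell r) fun y hy =>
    ENNReal.ofReal_le_ofReal (aNorm_rpow_comparable_of_mem_aniShell hr hy β).1

lemma ofReal_rpow_mul_volume_aniShell_le {r : ℝ} (hr : 0 < r) (β : ℝ) :
    ENNReal.ofReal (r ^ β) * volume (aniShell a r)
      ≤ ENNReal.ofReal (2 ^ |β|) * ∫⁻ y in aniShell a r, ENNReal.ofReal (aNorm a y ^ β) := by
  rw [← setLIntegral_const, ← lintegral_const_mul' _ _ ENNReal.ofReal_ne_top]
  exact setLIntegral_mono' (measurableSet_aniShell r) fun y hy => by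
    rw [← ENNReal.ofReal_mul (by positivity)]
    exact ENNReal.ofReal_le_ofReal (aNorm_rpow_comparable_of_mem_aniShell hr hy β).2

lemma lintegral_aNorm_rpow_aniBox_zero_le_tsum (hn : 0 < n) (ha : ∀ i, 0 < a i) {t : ℝ}
    (ht : 0 < t) (β : ℝ) :
    ∫⁻ y in aniBox a 0 t, ENNReal.ofReal (aNorm a y ^ β) ≤ ENNReal.ofReal (2 ^ |β|) *
      ∑' k : ℕ, ENNReal.ofReal ((t / 2 ^ k) ^ β) * volume (aniShell a (t / 2 ^ k)) := by
  rw [lintegral_aniBox_zero_eq_tsum hn ha ht, ← ENNReal.tsum_mul_left]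
  exact ENNReal.tsum_le_tsum fun k => lintegral_aNorm_rpow_aniShell_le (by positivity) β

lemma tsum_le_lintegral_aNorm_rpow_aniBox_zero (hn : 0 < n) (ha : ∀ i, 0 < a i) {t : ℝ}
    (ht : 0 < t) (β : ℝ) :
    ∑' k : ℕ, ENNReal.ofReal ((t / 2 ^ k) ^ β) * volume (aniShell a (t / 2 ^ k))
      ≤ ENNReal.ofReal (2 ^ |β|) * ∫⁻ y in aniBox a 0 t, ENNReal.ofReal (aNorm a y ^ β) := by
  rw [lintegral_aniBox_zero_eq_tsum hn ha ht, ← ENNReal.tsum_mul_left]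
  exact ENNReal.tsum_le_tsum fun k => ofReal_rpow_mul_volume_aniShell_le (by positivity) β

lemma tsum_ofReal_rpow_mul_volume_aniShell (ha : ∀ i, 0 < a i) {t : ℝ} (ht : 0 < t) (β : ℝ) :
    ∑' k : ℕ, ENNReal.ofReal ((t / 2 ^ k) ^ β) * volume (aniShell a (t / 2 ^ k))
      = ENNReal.ofReal (2 ^ n * (1 - 2 ^ (-∑ i, a i))) * ENNReal.ofReal (t ^ (∑ i, a i + β)) *
        (1 - ENNReal.ofReal (2 ^ (-(∑ i, a i + β))))⁻¹ := by
  have hterm (k : ℕ) : ENNReal.ofReal ((t / 2 ^ k) ^ β) * volume (aniShell a (t / 2 ^ k))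
      = ENNReal.ofReal (2 ^ n * (1 - 2 ^ (-∑ i, a i))) *
        ENNReal.ofReal ((t / 2 ^ k) ^ (∑ i, a i + β)) := by
    have htk : 0 < t / 2 ^ k := by positivity
    rw [volume_aniShell ha htk, ← ENNReal.ofReal_mul (by positivity),
      ← ENNReal.ofReal_mul' (by positivity), Real.rpow_add htk]
    ring_nf
  simp_rw [hterm, ENNReal.tsum_mul_left, tsum_ofReal_div_two_pow_rpow ht, mul_assoc]

lemma lintegral_aNorm_rpow_aniBox_zero_le (hn : 0 < n) (ha : ∀ i, 0 < a i) {β : ℝ}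
    (hβ : -∑ i, a i < β) :
    ∃ K, 0 ≤ K ∧ ∀ t, 0 < t →
      ∫⁻ y in aniBox a 0 t, ENNReal.ofReal (aNorm a y ^ β)
        ≤ ENNReal.ofReal (K * t ^ (∑ i, a i + β)) := by
  set c := 2 ^ n * (1 - (2 : ℝ) ^ (-∑ i, a i))
  set q := (2 : ℝ) ^ (-(∑ i, a i + β))
  have hc := volume_aniShell_coeff_pos hn ha
  have hq : q < 1 := Real.rpow_lt_one_of_one_lt_of_neg one_lt_two (by linarith)
  have hq0 : 0 ≤ q := by positivity
  refine ⟨2 ^ |β| * c * (1 - q)⁻¹, by have := sub_pos.2 hq; positivity, fun t ht => ?_⟩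
  have hinv : (1 - ENNReal.ofReal q)⁻¹ = ENNReal.ofReal (1 - q)⁻¹ := by
    rw [← ENNReal.ofReal_one, ← ENNReal.ofReal_sub _ hq0, ENNReal.ofReal_inv_of_pos (by linarith)]
  calc ∫⁻ y in aniBox a 0 t, ENNReal.ofReal (aNorm a y ^ β)
      ≤ ENNReal.ofReal (2 ^ |β|) * (ENNReal.ofReal c * ENNReal.ofReal (t ^ (∑ i, a i + β)) *
          (1 - ENNReal.ofReal q)⁻¹) := by
        rw [← tsum_ofReal_rpow_mul_volume_aniShell ha ht]
        exact lintegral_aNorm_rpow_aniBox_zero_le_tsum hn ha ht β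
    _ = ENNReal.ofReal (2 ^ |β| * c * (1 - q)⁻¹ * t ^ (∑ i, a i + β)) := by
        rw [hinv, ← ENNReal.ofReal_mul (by positivity), ← ENNReal.ofReal_mul (by positivity),
          ← ENNReal.ofReal_mul (by positivity)]
        ring_nf

lemma lintegral_aNorm_rpow_aniBox_zero_eq_top (hn : 0 < n) (ha : ∀ i, 0 < a i) {β : ℝ}
    (hβ : β ≤ -∑ i, a i) {t : ℝ} (ht : 0 < t) :
    ∫⁻ y in aniBox a 0 t, ENNReal.ofReal (aNorm a y ^ β) = ⊤ := by
  have hc := volume_aniShell_coeff_pos hn ha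
  have hq : 1 ≤ (2 : ℝ) ^ (-(∑ i, a i + β)) := Real.one_le_rpow one_le_two (by linarith)
  have hsum := tsum_le_lintegral_aNorm_rpow_aniBox_zero hn ha ht β
  rw [tsum_ofReal_rpow_mul_volume_aniShell ha ht, ← ENNReal.ofReal_mul hc.le,
    tsub_eq_zero_of_le (ENNReal.one_le_ofReal.2 hq), ENNReal.inv_zero,
    ENNReal.mul_top (ENNReal.ofReal_pos.2 (by positivity)).ne', top_le_iff,
    ENNReal.mul_eq_top] at hsum
  exact (hsum.resolve_right fun h => ENNReal.ofReal_ne_top h.1).2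

lemma lintegral_aNorm_rpow_aniBox_zero_pos (hn : 0 < n) (ha : ∀ i, 0 < a i) (β : ℝ) {t : ℝ}
    (ht : 0 < t) : 0 < ∫⁻ y in aniBox a 0 t, ENNReal.ofReal (aNorm a y ^ β) := by
  have hc := volume_aniShell_coeff_pos hn ha
  have hsum := tsum_le_lintegral_aNorm_rpow_aniBox_zero hn ha ht β
  rw [tsum_ofReal_rpow_mul_volume_aniShell ha ht, ← ENNReal.ofReal_mul hc.le] at hsum
  refine pos_iff_ne_zero.2 fun h0 => ?_
  rw [h0, mul_zero, nonpos_iff_eq_zero, mul_eq_zero, ENNReal.inv_eq_zero] at hsum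
  exact hsum.elim (ENNReal.ofReal_pos.2 (by positivity)).ne'
    (ENNReal.sub_ne_top ENNReal.one_ne_top)

def aniBoxAvg (a : Fin n → ℝ) (β : ℝ) (x : Fin n → ℝ) (t : ℝ) : ℝ≥0∞ :=
  (volume (aniBox a x t))⁻¹ * ∫⁻ y in aniBox a x t, ENNReal.ofReal (aNorm a y ^ β)

lemma aniBoxAvg_le_of_le_mul (ha : ∀ i, 0 < a i) {L : ℝ} (hL0 : 0 < L)
    (hL : ∀ x y : Fin n → ℝ, aNorm a (x + y) ≤ L * max (aNorm a x) (aNorm a y))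
    {β K : ℝ} (hK0 : 0 ≤ K) (hK : ∀ t, 0 < t →
      ∫⁻ y in aniBox a 0 t, ENNReal.ofReal (aNorm a y ^ β)
        ≤ ENNReal.ofReal (K * t ^ (∑ i, a i + β)))
    {x : Fin n → ℝ} {t : ℝ} (ht : 0 < t) (hnear : max (aNorm a x) t ≤ L * t) :
    aniBoxAvg a β x t ≤ ENNReal.ofReal
      (K * L ^ (∑ i, a i + β) * L ^ (∑ i, a i) / 2 ^ n * max (aNorm a x) t ^ β) := by
  set s := ∑ i, a i
  set m := max (aNorm a x) t
  have hm : 0 < m := ht.trans_le (le_max_right _ _)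
  have hmL : m ^ s ≤ L ^ s * t ^ s := by
    rw [← Real.mul_rpow hL0.le ht.le]
    exact Real.rpow_le_rpow hm.le hnear (Finset.sum_nonneg fun i _ => (ha i).le)
  calc aniBoxAvg a β x t
      ≤ (ENNReal.ofReal (2 ^ n * t ^ s))⁻¹ * ENNReal.ofReal (K * (L * m) ^ (s + β)) := by
        rw [aniBoxAvg, volume_aniBox x ht]
        exact mul_le_mul_right ((lintegral_mono_set (aniBox_subset_aniBox_zero ha hL0.le hL x
          ht.le)).trans (hK _ (by positivity))) _
    _ = ENNReal.ofReal (K * (L * m) ^ (s + β) / (2 ^ n * t ^ s)) := by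
        rw [← ENNReal.ofReal_inv_of_pos (by positivity), ← ENNReal.ofReal_mul (by positivity),
          div_eq_inv_mul]
    _ ≤ ENNReal.ofReal (K * L ^ (s + β) * L ^ s / 2 ^ n * m ^ β) := by
        refine ENNReal.ofReal_le_ofReal ((div_le_iff₀ (by positivity)).2 ?_)
        calc K * (L * m) ^ (s + β) = K * L ^ (s + β) * m ^ β * m ^ s := by
              rw [Real.mul_rpow hL0.le hm.le, Real.rpow_add hm]; ring
          _ ≤ K * L ^ (s + β) * m ^ β * (L ^ s * t ^ s) := by gcongr
          _ = K * L ^ (s + β) * L ^ s / 2 ^ n * m ^ β * (2 ^ n * t ^ s) := by field_simp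

lemma aniBoxAvg_le_of_mul_lt (ha : ∀ i, 0 < a i) {L : ℝ} (hL1 : 1 ≤ L)
    (hL : ∀ x y : Fin n → ℝ, aNorm a (x + y) ≤ L * max (aNorm a x) (aNorm a y))
    (β : ℝ) {x : Fin n → ℝ} {t : ℝ} (ht : 0 < t) (hfar : L * t < aNorm a x) :
    aniBoxAvg a β x t ≤ ENNReal.ofReal (L ^ |β| * aNorm a x ^ β) := by
  refine inv_measure_mul_setLIntegral_le (measurableSet_aniBox x t) fun y hy => ?_
  obtain ⟨hxy, hyx⟩ := aNorm_comparable_of_mem_aniBox ha hL1 hL ht.le hfar hy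
  exact rpow_le_rpow_abs_mul_rpow hL1 (by nlinarith) (by nlinarith) hxy hyx

lemma aniBoxAvg_le (hn : 0 < n) (ha : ∀ i, 0 < a i) {β : ℝ} (hβ : -∑ i, a i < β) :
    ∃ K, 0 ≤ K ∧ ∀ x t, 0 < t →
      aniBoxAvg a β x t ≤ ENNReal.ofReal (K * max (aNorm a x) t ^ β) := by
  obtain ⟨L, hL1, hL⟩ := exists_aNorm_add_le ha
  obtain ⟨K, hK0, hK⟩ := lintegral_aNorm_rpow_aniBox_zero_le hn ha hβ
  have hL0 : 0 < L := one_pos.trans_le hL1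
  set Knear := K * L ^ (∑ i, a i + β) * L ^ (∑ i, a i) / 2 ^ n
  refine ⟨max Knear (L ^ |β|), by positivity, fun x t ht => ?_⟩
  rcases le_or_gt (max (aNorm a x) t) (L * t) with hnear | hfar
  · refine (aniBoxAvg_le_of_le_mul ha hL0 hL hK0 hK ht hnear).trans ?_
    gcongr
    exact le_max_left _ _
  · have hx : L * t < aNorm a x := (lt_max_iff.1 hfar).resolve_right (by nlinarith)
    rw [show max (aNorm a x) t = aNorm a x from max_eq_left (by nlinarith)]
    refine (aniBoxAvg_le_of_mul_lt ha hL1 hL β ht hx).trans ?_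
    gcongr
    · exact Real.rpow_nonneg (aNorm_nonneg x) β
    · exact le_max_right _ _

lemma aniBoxAvg_zero_ne_zero (hn : 0 < n) (ha : ∀ i, 0 < a i) (β : ℝ) {t : ℝ} (ht : 0 < t) :
    aniBoxAvg a β 0 t ≠ 0 :=
  mul_ne_zero (by rw [ENNReal.inv_ne_zero, volume_aniBox 0 ht]; exact ENNReal.ofReal_ne_top)
    (lintegral_aNorm_rpow_aniBox_zero_pos hn ha β ht).ne'

lemma neg_sum_lt_of_aniBoxAvg_zero_lt_top (hn : 0 < n) (ha : ∀ i, 0 < a i) {β t : ℝ}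
    (ht : 0 < t) (h : aniBoxAvg a β 0 t < ⊤) : -∑ i, a i < β := by
  by_contra! hβ
  rw [aniBoxAvg, lintegral_aNorm_rpow_aniBox_zero_eq_top hn ha hβ ht,
    ENNReal.mul_top (by rw [ENNReal.inv_ne_zero, volume_aniBox 0 ht]; exact ENNReal.ofReal_ne_top)]
    at h
  exact h.ne rfl

lemma exists_aniBoxAvg_mul_rpow_le (hn : 0 < n) (ha : ∀ i, 0 < a i) {β₁ β₂ q : ℝ}
    (hβ₁ : -∑ i, a i < β₁) (hβ₂ : -∑ i, a i < β₂) (hq : 0 ≤ q) (hdual : β₁ + β₂ * q = 0) :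
    ∃ C, ∀ x t, 0 < t → aniBoxAvg a β₁ x t * aniBoxAvg a β₂ x t ^ q ≤ ENNReal.ofReal C := by
  obtain ⟨K₁, hK₁, hK₁'⟩ := aniBoxAvg_le hn ha hβ₁
  obtain ⟨K₂, hK₂, hK₂'⟩ := aniBoxAvg_le hn ha hβ₂
  refine ⟨K₁ * K₂ ^ q, fun x t ht => ?_⟩
  set m := max (aNorm a x) t
  have hm : 0 < m := ht.trans_le (le_max_right _ _)
  calc aniBoxAvg a β₁ x t * aniBoxAvg a β₂ x t ^ q
      ≤ ENNReal.ofReal (K₁ * m ^ β₁) * ENNReal.ofReal (K₂ * m ^ β₂) ^ q := by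
        gcongr
        exacts [hK₁' x t ht, hK₂' x t ht]
    _ = ENNReal.ofReal (K₁ * K₂ ^ q * m ^ (β₁ + β₂ * q)) := by
        rw [ENNReal.ofReal_rpow_of_nonneg (by positivity) hq, ← ENNReal.ofReal_mul (by positivity),
          Real.mul_rpow hK₂ (by positivity), ← Real.rpow_mul hm.le, Real.rpow_add hm]
        ring_nf
    _ = ENNReal.ofReal (K₁ * K₂ ^ q) := by rw [hdual, Real.rpow_zero, mul_one]

end

/-- For `1 < p < ∞`, the anisotropic power weight `w(x) = |x|_a^α` is in the
anisotropic Muckenhoupt class `A_p` if and only if `-|a| < α < |a|(p-1)`,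
where `|a| = a₁ + ⋯ + aₙ`. -/
theorem power_weight_mem_Ap_iff
    {n : ℕ} (hn : 0 < n) (a : Fin n → ℝ) (ha : ∀ i, 0 < a i)
    (p : ℝ) (hp : 1 < p) (α : ℝ) :
    (∃ C : ℝ, 1 < C ∧ ∀ x t, 0 < t →
      ((volume (aniBox a x t))⁻¹ *
          ∫⁻ y in aniBox a x t, ENNReal.ofReal (aNorm a y ^ α)) *
        ((volume (aniBox a x t))⁻¹ *
          ∫⁻ y in aniBox a x t,
            ENNReal.ofReal ((aNorm a y ^ α) ^ (1 - p / (p - 1)))) ^ (p - 1)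
        ≤ ENNReal.ofReal C) ↔
      (-(∑ i, a i) < α ∧ α < (∑ i, a i) * (p - 1)) := by
  have hp1 : 0 < p - 1 := sub_pos.2 hp
  have hdual (y : Fin n → ℝ) :
      (aNorm a y ^ α) ^ (1 - p / (p - 1)) = aNorm a y ^ (-(α / (p - 1))) := by
    rw [← Real.rpow_mul (aNorm_nonneg y)]
    congr 1
    field_simp
    ring
  have hdual_lt : -∑ i, a i < -(α / (p - 1)) ↔ α < (∑ i, a i) * (p - 1) := by
    rw [neg_lt_neg_iff, div_lt_iff₀ hp1]
  simp_rw [hdual, ← aniBoxAvg.eq_1, ← hdual_lt]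
  constructor
  · rintro ⟨C, -, hC⟩
    obtain ⟨h₁, h₂⟩ := lt_top_of_mul_rpow_lt_top hp1 (aniBoxAvg_zero_ne_zero hn ha _ one_pos)
      (aniBoxAvg_zero_ne_zero hn ha _ one_pos) ((hC 0 1 one_pos).trans_lt ENNReal.ofReal_lt_top)
    exact ⟨neg_sum_lt_of_aniBoxAvg_zero_lt_top hn ha one_pos h₁,
      neg_sum_lt_of_aniBoxAvg_zero_lt_top hn ha one_pos h₂⟩
  · rintro ⟨h₁, h₂⟩
    obtain ⟨C, hC⟩ := exists_aniBoxAvg_mul_rpow_le hn ha h₁ h₂ hp1.le (by field_simp; ring)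
    exact ⟨max 2 C, one_lt_two.trans_le (le_max_left _ _),
      fun x t ht => (hC x t ht).trans (ENNReal.ofReal_le_ofReal (le_max_right _ _))⟩
end
end

section
/- In dimension one, let −1/2 < α < 0, let w(x) = |x|^α, and let f(x) = χ_{(0,1)}(x)·|x|^{−1/2}. Then f belongs to the weighted Morrey space L_{1,κ}(w) with κ = (α + 1/2)/(α + 1); that is, sup_I w(I)^{−κ} ∫_I |f(x)| w(x)dx < ∞, the supremum over all bounded intervals I ⊂ ℝ. -/
open MeasureTheory ENNReal Set

noncomputable section

/-! Write `κ = (α + 1/2)/(α + 1)` and cut the interval `I` down to `J = I ∩ (0,1) = (a,b)`. Both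
integrals over `J` are explicit: `∫_J |f| w = (b^{α+1/2} - a^{α+1/2})/(α+1/2)` and
`w(J) = (b^{α+1} - a^{α+1})/(α+1)`. Since `κ (α + 1) = α + 1/2`, the numerator is a difference of
`κ`-th powers of `b^{α+1}` and `a^{α+1}`, and `t ↦ t^κ` is subadditive for `κ ≤ 1`; hence the
numerator is at most `(α+1)^κ/(α+1/2) · w(J)^κ ≤ (α+1)^κ/(α+1/2) · w(I)^κ`. -/

lemma rpow_sub_rpow_le_sub_rpow {p x y : ℝ} (hy : 0 ≤ y) (hyx : y ≤ x) (hp₀ : 0 ≤ p)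
    (hp₁ : p ≤ 1) : x ^ p - y ^ p ≤ (x - y) ^ p := by
  have h := Real.rpow_add_le_add_rpow (sub_nonneg.mpr hyx) hy hp₀ hp₁
  rw [sub_add_cancel] at h
  linarith

lemma lintegral_Ioo_ofReal_rpow {r a b : ℝ} (hr : -1 < r) (ha : 0 ≤ a) (hab : a ≤ b) :
    ∫⁻ x in Ioo a b, ENNReal.ofReal (x ^ r)
      = ENNReal.ofReal ((b ^ (r + 1) - a ^ (r + 1)) / (r + 1)) := by
  have hint : IntegrableOn (fun x : ℝ => x ^ r) (Ioo a b) :=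
    ((intervalIntegrable_iff_integrableOn_Ioc_of_le hab).mp
      (intervalIntegral.intervalIntegrable_rpow' hr)).mono_set Ioo_subset_Ioc_self
  have hnonneg : 0 ≤ᵐ[volume.restrict (Ioo a b)] fun x : ℝ => x ^ r := by
    filter_upwards [ae_restrict_mem measurableSet_Ioo] with x hx
    exact Real.rpow_nonneg (ha.trans hx.1.le) r
  rw [← ofReal_integral_eq_lintegral_ofReal hint hnonneg, ← integral_Ioc_eq_integral_Ioo,
    ← intervalIntegral.integral_of_le hab, integral_rpow (Or.inl hr)]

lemma setLIntegral_Ioo_rpow_le_mul_rpow {s t a b : ℝ} (hs : -1 < s) (hst : s ≤ t)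
    (ha : 0 ≤ a) :
    ∫⁻ x in Ioo a b, ENNReal.ofReal (x ^ s)
      ≤ ENNReal.ofReal ((t + 1) ^ ((s + 1) / (t + 1)) / (s + 1)) *
          (∫⁻ x in Ioo a b, ENNReal.ofReal (x ^ t)) ^ ((s + 1) / (t + 1)) := by
  rcases le_or_gt b a with hba | hab
  · simp [Ioo_eq_empty_of_le hba]
  set κ := (s + 1) / (t + 1) with hκ
  have hs₁ : 0 < s + 1 := by linarith
  have ht₁ : 0 < t + 1 := by linarith
  have hκ₀ : 0 ≤ κ := by positivity
  have hκ₁ : κ ≤ 1 := (div_le_one ht₁).mpr (by linarith)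
  have hpow : ∀ x : ℝ, 0 ≤ x → x ^ (s + 1) = (x ^ (t + 1)) ^ κ := fun x hx => by
    rw [← Real.rpow_mul hx, hκ, mul_div_cancel₀ _ ht₁.ne']
  set X := b ^ (t + 1)
  set Y := a ^ (t + 1)
  have hYX : Y ≤ X := Real.rpow_le_rpow ha hab.le ht₁.le
  rw [lintegral_Ioo_ofReal_rpow hs ha hab.le,
    lintegral_Ioo_ofReal_rpow (hs.trans_le hst) ha hab.le,
    ENNReal.ofReal_rpow_of_nonneg (div_nonneg (sub_nonneg.mpr hYX) ht₁.le) hκ₀,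
    ← ENNReal.ofReal_mul (by positivity)]
  refine ENNReal.ofReal_le_ofReal ?_
  calc (b ^ (s + 1) - a ^ (s + 1)) / (s + 1)
      = (X ^ κ - Y ^ κ) / (s + 1) := by rw [hpow b (ha.trans hab.le), hpow a ha]
    _ ≤ (X - Y) ^ κ / (s + 1) := by
      gcongr
      exact rpow_sub_rpow_le_sub_rpow (Real.rpow_nonneg ha _) hYX hκ₀ hκ₁
    _ = (t + 1) ^ κ / (s + 1) * ((X - Y) / (t + 1)) ^ κ := by
      rw [Real.div_rpow (sub_nonneg.mpr hYX) ht₁.le]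
      field_simp

lemma setLIntegral_Ioo_indicator_rpow_mul_rpow (r α u v : ℝ) :
    ∫⁻ x in Ioo u v,
        ENNReal.ofReal (|(Ioo (0 : ℝ) 1).indicator (fun y => |y| ^ r) x| * |x| ^ α)
      = ∫⁻ x in Ioo (max u 0) (min v 1), ENNReal.ofReal (x ^ (r + α)) := by
  have hintegrand : (fun x : ℝ =>
      ENNReal.ofReal (|(Ioo (0 : ℝ) 1).indicator (fun y => |y| ^ r) x| * |x| ^ α))
      = (Ioo (0 : ℝ) 1).indicator fun x => ENNReal.ofReal (x ^ (r + α)) := by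
    funext x
    by_cases hx : x ∈ Ioo (0 : ℝ) 1
    · rw [indicator_of_mem hx, indicator_of_mem hx, abs_of_pos hx.1,
        abs_of_nonneg (Real.rpow_nonneg hx.1.le _), ← Real.rpow_add hx.1]
    · simp [indicator_of_notMem hx]
  rw [hintegrand, lintegral_indicator measurableSet_Ioo,
    Measure.restrict_restrict measurableSet_Ioo, Ioo_inter_Ioo, max_comm, min_comm]

theorem power_function_mem_weighted_Morrey_general
    (α : ℝ) (hα₁ : -(1/2 : ℝ) < α) :
    (⨆ (u : ℝ) (v : ℝ) (_ : u < v),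
        (∫⁻ x in Set.Ioo u v,
            ENNReal.ofReal
              (|Set.indicator (Set.Ioo (0:ℝ) 1)
                  (fun y => |y| ^ (-(1/2 : ℝ))) x| * |x| ^ α)) /
          (∫⁻ x in Set.Ioo u v, ENNReal.ofReal (|x| ^ α)) ^
            ((α + 1/2) / (α + 1))) < ⊤ := by
  have hκ : (α + 1/2) / (α + 1) = (-(1/2) + α + 1) / (α + 1) := by ring
  refine lt_of_le_of_lt (iSup₂_le fun u v => iSup_le fun _ => ?_)
    (ofReal_lt_top (r := (α + 1) ^ ((-(1/2) + α + 1) / (α + 1)) / (-(1/2) + α + 1)))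
  have hJ : Ioo (max u 0) (min v 1) ⊆ Ioo u v := Ioo_subset_Ioo (le_max_left _ _) (min_le_left _ _)
  have hweight : ∫⁻ x in Ioo (max u 0) (min v 1), ENNReal.ofReal (x ^ α)
      ≤ ∫⁻ x in Ioo u v, ENNReal.ofReal (|x| ^ α) := by
    refine (setLIntegral_congr_fun measurableSet_Ioo fun x hx => ?_).trans_le
      (lintegral_mono_set hJ)
    rw [abs_of_pos ((le_max_right u 0).trans_lt hx.1)]
  rw [setLIntegral_Ioo_indicator_rpow_mul_rpow, hκ]
  refine ENNReal.div_le_of_le_mul ?_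
  calc _ ≤ _ := setLIntegral_Ioo_rpow_le_mul_rpow (s := -(1/2) + α) (t := α) (by linarith)
        (by linarith) (le_max_right u 0)
    _ ≤ _ := by
      gcongr
      exact div_nonneg (by linarith) (by linarith)

/-- In dimension one, for `-1/2 < α < 0`, the function
`f(x) = χ_{(0,1)}(x) |x|^{-1/2}` belongs to the weighted Morrey space
`L_{1,κ}(w)` with weight `w(x) = |x|^α` and `κ = (α + 1/2)/(α + 1)`:
the supremum over all bounded intervals `I` of
`w(I)^{-κ} ∫_I |f| w` is finite. -/
theorem power_function_mem_weighted_Morrey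
    (α : ℝ) (hα₁ : -(1/2 : ℝ) < α) (hα₂ : α < 0) :
    (⨆ (u : ℝ) (v : ℝ) (_ : u < v),
        (∫⁻ x in Set.Ioo u v,
            ENNReal.ofReal
              (|Set.indicator (Set.Ioo (0:ℝ) 1)
                  (fun y => |y| ^ (-(1/2 : ℝ))) x| * |x| ^ α)) /
          (∫⁻ x in Set.Ioo u v, ENNReal.ofReal (|x| ^ α)) ^
            ((α + 1/2) / (α + 1))) < ⊤ :=
  power_function_mem_weighted_Morrey_general α hα₁
end
end
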